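/- arXiv:1411.5741 — 2 statements merged into one kernel-verified Lean document; each statement's English description precedes it below -/
import Mathlib

section
/- Let q be a prime power, h ≥ 1, d ≥ 2 integers, and β ∈ F_{q^{h+1}} an element of degree d+1 over F_q. Let φ : F_{q^{h+1}}^* → F_{q^{h+1}}^*/F_q^* be the quotient map. Then the set SG(q,β) = {φ(1)} ∪ {φ(β + a) : a ∈ F_q} is a B_d set in the quotient group F_{q^{h+1}}^*/F_q^*, and it has exactly q + 1 elements. -/
/-!
Write `φ(x)` for the class of `x` modulo `F_q^*`. A product of at most `d` elements of
`{φ(β + a)}` is `φ(P(β))` for the monic polynomial `P = ∏ (X + a)` of degree at most `d`.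
If two such products agree then `P₁(β) = c P₂(β)` with `c ∈ F_q^*`; since `β` has degree
`d + 1 > deg P_i`, this forces `P₁ = c P₂`, so `c = 1` by monicity and the multisets of
shifts coincide as the root multisets of `P₁ = P₂`. Padding with `φ(1) = 1` then turns
products of exactly `d` elements of `SG(q, β)` into products of at most `d` shifts.
-/

open Polynomial

/-- Multiplicative `B_h[g]` property. -/
def IsMulBhg {G : Type*} [CommMonoid G] (A : Set G) (h g : ℕ) : Prop :=
  ∀ b : G, ∀ s : Finset (Multiset G),
    (∀ m ∈ s, Multiset.card m = h ∧ (∀ x ∈ m, x ∈ A) ∧ m.prod = b) → s.card ≤ g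

theorem Multiset.exists_map_eq_of_forall_mem_range {α β : Type*} {f : α → β}
    {m : Multiset β} (hm : ∀ x ∈ m, x ∈ Set.range f) : ∃ t : Multiset α, t.map f = m := by
  choose g hg using hm
  refine ⟨m.attach.map fun x => g x.1 x.2, ?_⟩
  conv_rhs => rw [← Multiset.attach_map_val m]
  rw [Multiset.map_map]
  exact Multiset.map_congr rfl fun x _ => hg x.1 x.2

theorem Multiset.exists_eq_map_add_replicate {α β : Type*} {f : α → β} {b : β}
    {m : Multiset β} (hm : ∀ x ∈ m, x ∈ insert b (Set.range f)) :
    ∃ (t : Multiset α) (k : ℕ), m = t.map f + Multiset.replicate k b := by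
  classical
  obtain ⟨t, ht⟩ := Multiset.exists_map_eq_of_forall_mem_range (f := f)
    (m := m.filter (· ≠ b)) fun x hx => by
      obtain ⟨hxm, hxb⟩ := Multiset.mem_filter.1 hx
      exact (Set.mem_insert_iff.1 (hm x hxm)).resolve_left hxb
  refine ⟨t, m.count b, ?_⟩
  rw [ht, ← Multiset.filter_eq', add_comm]
  exact (Multiset.filter_add_not _ m).symm

section InsertOneRange

variable {G ι : Type*} [CommMonoid G] {f : ι → G} {d : ℕ}

theorem isMulBhg_insert_one_range
    (hf : Set.InjOn (fun t : Multiset ι => (t.map f).prod) {t | Multiset.card t ≤ d}) :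
    IsMulBhg (insert 1 (Set.range f)) d 1 := by
  have decode : ∀ m : Multiset G, Multiset.card m = d → (∀ x ∈ m, x ∈ insert 1 (Set.range f)) →
      ∃ t : Multiset ι, Multiset.card t ≤ d ∧ m.prod = (t.map f).prod ∧
        m = t.map f + Multiset.replicate (d - Multiset.card t) 1 := by
    intro m hcard hm
    obtain ⟨t, k, rfl⟩ := Multiset.exists_eq_map_add_replicate hm
    simp only [Multiset.card_add, Multiset.card_map, Multiset.card_replicate] at hcard
    refine ⟨t, by omega, by simp, by rw [← hcard, Nat.add_sub_cancel_left]⟩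
  intro b s hs
  refine Finset.card_le_one.2 fun m₁ h₁ m₂ h₂ => ?_
  obtain ⟨hcard₁, hm₁, rfl⟩ := hs m₁ h₁
  obtain ⟨hcard₂, hm₂, hprod⟩ := hs m₂ h₂
  obtain ⟨t₁, ht₁, hprod₁, rfl⟩ := decode m₁ hcard₁ hm₁
  obtain ⟨t₂, ht₂, hprod₂, rfl⟩ := decode m₂ hcard₂ hm₂
  rw [hf ht₁ ht₂ (hprod₁.symm.trans (hprod.symm.trans hprod₂))]

theorem ncard_insert_one_range [Finite ι] (hd : 1 ≤ d)
    (hf : Set.InjOn (fun t : Multiset ι => (t.map f).prod) {t | Multiset.card t ≤ d}) :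
    (insert 1 (Set.range f)).ncard = Nat.card ι + 1 := by
  have hsingle : ∀ a, ({a} : Multiset ι) ∈ {t : Multiset ι | Multiset.card t ≤ d} := fun _ => by
    simpa using hd
  have hinj : Function.Injective f := fun a b hab =>
    Multiset.singleton_inj.1 (hf (hsingle a) (hsingle b) (by simpa using hab))
  have hone : 1 ∉ Set.range f := by
    rintro ⟨a, ha⟩
    exact Multiset.singleton_ne_zero a (hf (hsingle a) (by simp) (by simpa using ha))
  rw [Set.ncard_insert_of_notMem hone (Set.finite_range f), Set.ncard_range_of_injective hinj]

end InsertOneRange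

theorem Polynomial.multiset_prod_X_add_C_injective {R : Type*} [CommRing R] [IsDomain R] :
    Function.Injective fun t : Multiset R => (t.map fun a => X + C a).prod := by
  intro t₁ t₂ h
  have hroots : ∀ t : Multiset R, (t.map fun a => X + C a).prod.roots = t.map Neg.neg := by
    intro t
    rw [← roots_multiset_prod_X_sub_C (t.map Neg.neg), Multiset.map_map]
    simp [sub_eq_add_neg]
  refine Multiset.map_injective neg_injective ?_
  rw [← hroots, ← hroots]
  exact congrArg roots h

theorem minpoly.eq_of_aeval_eq {K L : Type*} [Field K] [Ring L] [Algebra K L] {x : L}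
    {p r : K[X]} (hp : p.natDegree < (minpoly K x).natDegree)
    (hr : r.natDegree < (minpoly K x).natDegree) (h : Polynomial.aeval x p = Polynomial.aeval x r) : p = r := by
  by_contra hne
  have hdeg := natDegree_le_natDegree <|
    minpoly.degree_le_of_ne_zero K x (sub_ne_zero.2 hne) (by rw [map_sub, h, sub_self])
  have := natDegree_sub_le p r
  omega

theorem injOn_prod_mk_add_algebraMap {K L : Type*} [Field K] [Field L] [Algebra K L]
    {β : L} {d : ℕ} (hd : d < (minpoly K β).natDegree) {u : K → Lˣ}
    (hu : ∀ a, (u a : L) = β + algebraMap K L a) :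
    Set.InjOn (fun t : Multiset K =>
      (t.map fun a => (u a : Lˣ ⧸ (Units.map (algebraMap K L).toMonoidHom).range)).prod)
      {t | Multiset.card t ≤ d} := by
  set P : Multiset K → K[X] := fun t => (t.map fun a => X + C a).prod
  have hmonic : ∀ t, (P t).Monic := fun t =>
    monic_multiset_prod_of_monic _ _ fun a _ => monic_X_add_C a
  have hdegP : ∀ t, (P t).natDegree = Multiset.card t := by
    intro t
    rw [natDegree_multiset_prod_of_monic _ (by simp [monic_X_add_C])]
    simp
  have haeval : ∀ t, aeval β (P t) = ((t.map u).prod : L) := by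
    intro t
    rw [← Units.coeHom_apply, map_multiset_prod, Multiset.map_map]
    simp [map_multiset_prod, Multiset.map_map, Function.comp_def, hu]
  intro t₁ ht₁ t₂ ht₂ heq
  obtain ⟨c, hc⟩ : ∃ c : Kˣ,
      (t₁.map u).prod * Units.map (algebraMap K L).toMonoidHom c = (t₂.map u).prod := by
    have hmk : ∀ t : Multiset K, (t.map fun a =>
        (u a : Lˣ ⧸ (Units.map (algebraMap K L).toMonoidHom).range)).prod =
        QuotientGroup.mk' _ (t.map u).prod := fun t => by
      rw [map_multiset_prod, Multiset.map_map]; rfl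
    simp only [hmk] at heq
    obtain ⟨_, ⟨c, rfl⟩, h⟩ := (QuotientGroup.mk'_eq_mk' _).1 heq
    exact ⟨c, h⟩
  have hpoly : P t₁ * C (c : K) = P t₂ := by
    refine minpoly.eq_of_aeval_eq (x := β) ?_ (by rw [hdegP]; exact lt_of_le_of_lt ht₂ hd) ?_
    · refine lt_of_le_of_lt natDegree_mul_le ?_
      rw [hdegP, natDegree_C, add_zero]
      exact lt_of_le_of_lt ht₁ hd
    · rw [map_mul, aeval_C, haeval, haeval, ← hc]
      simp
  have hc1 : (c : K) = 1 := by
    simpa [(hmonic t₁).leadingCoeff, (hmonic t₂).leadingCoeff] using congrArg leadingCoeff hpoly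
  rw [hc1, C_1, mul_one] at hpoly
  exact multiset_prod_X_add_C_injective hpoly

theorem stmt_8_general {Fq E : Type*} [Field Fq] [Fintype Fq] [Field E] [Algebra Fq E]
    (q d : ℕ) (hq : Fintype.card Fq = q) (hd : 2 ≤ d)
    (β : E) (hdeg : (minpoly Fq β).natDegree = d + 1) :
    IsMulBhg ({(1 : Eˣ ⧸ (Units.map (algebraMap Fq E).toMonoidHom).range)} ∪
        {x : Eˣ ⧸ (Units.map (algebraMap Fq E).toMonoidHom).range | ∃ a : Fq, ∃ u : Eˣ,
          (u : E) = β + algebraMap Fq E a ∧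
          x = QuotientGroup.mk' (Units.map (algebraMap Fq E).toMonoidHom).range u}) d 1 ∧
    Set.ncard ({(1 : Eˣ ⧸ (Units.map (algebraMap Fq E).toMonoidHom).range)} ∪
        {x : Eˣ ⧸ (Units.map (algebraMap Fq E).toMonoidHom).range | ∃ a : Fq, ∃ u : Eˣ,
          (u : E) = β + algebraMap Fq E a ∧
          x = QuotientGroup.mk' (Units.map (algebraMap Fq E).toMonoidHom).range u})
      = q + 1 := by
  have hβ : β ∉ (algebraMap Fq E).range := fun h => by
    have := minpoly.natDegree_eq_one_iff.2 h
    omega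
  have hne : ∀ a : Fq, β + algebraMap Fq E a ≠ 0 := fun a h =>
    hβ ⟨-a, by rw [map_neg, eq_neg_of_add_eq_zero_left h]⟩
  set u : Fq → Eˣ := fun a => Units.mk0 _ (hne a)
  have hinj := injOn_prod_mk_add_algebraMap (d := d) (by omega) (u := u) fun _ => rfl
  have hS : {(1 : Eˣ ⧸ (Units.map (algebraMap Fq E).toMonoidHom).range)} ∪
      {x : Eˣ ⧸ (Units.map (algebraMap Fq E).toMonoidHom).range | ∃ a : Fq, ∃ v : Eˣ,
        (v : E) = β + algebraMap Fq E a ∧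
        x = QuotientGroup.mk' (Units.map (algebraMap Fq E).toMonoidHom).range v} =
      insert 1 (Set.range fun a => (u a : Eˣ ⧸ _)) := by
    rw [Set.singleton_union]
    congr 1
    ext x
    constructor
    · rintro ⟨a, v, hv, rfl⟩
      exact ⟨a, congrArg _ (Units.ext hv.symm)⟩
    · rintro ⟨a, rfl⟩
      exact ⟨a, u a, rfl, rfl⟩
  rw [hS, ncard_insert_one_range (by omega) hinj, Nat.card_eq_fintype_card, hq]
  exact ⟨isMulBhg_insert_one_range hinj, rfl⟩

theorem stmt_8 {Fq E : Type*} [Field Fq] [Fintype Fq] [Field E] [Fintype E] [Algebra Fq E]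
    (q h d : ℕ) (hq : Fintype.card Fq = q) (hh : 1 ≤ h) (hd : 2 ≤ d)
    (hcard : Fintype.card E = q ^ (h + 1))
    (β : E) (hdeg : (minpoly Fq β).natDegree = d + 1) :
    IsMulBhg ({(1 : Eˣ ⧸ (Units.map (algebraMap Fq E).toMonoidHom).range)} ∪
        {x : Eˣ ⧸ (Units.map (algebraMap Fq E).toMonoidHom).range | ∃ a : Fq, ∃ u : Eˣ,
          (u : E) = β + algebraMap Fq E a ∧
          x = QuotientGroup.mk' (Units.map (algebraMap Fq E).toMonoidHom).range u}) d 1 ∧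
    Set.ncard ({(1 : Eˣ ⧸ (Units.map (algebraMap Fq E).toMonoidHom).range)} ∪
        {x : Eˣ ⧸ (Units.map (algebraMap Fq E).toMonoidHom).range | ∃ a : Fq, ∃ u : Eˣ,
          (u : E) = β + algebraMap Fq E a ∧
          x = QuotientGroup.mk' (Units.map (algebraMap Fq E).toMonoidHom).range u})
      = q + 1 :=
  stmt_8_general q d hq hd β hdeg
end

section
/- Let p be a prime, h ≥ 3, and θ a primitive element of F_{p^{h−1}}. Then the set GT(p,h,θ) = {(a, log_θ(θ + a)) : a ∈ F_p} is a B_h set in Z/pZ × Z/(p^{h−1} − 1)Z with p elements. -/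
/-- Additive `B_h[g]` property. -/
def IsBhg {G : Type*} [AddCommMonoid G] (A : Set G) (h g : ℕ) : Prop :=
  ∀ b : G, ∀ s : Finset (Multiset G),
    (∀ m ∈ s, Multiset.card m = h ∧ (∀ x ∈ m, x ∈ A) ∧ m.sum = b) → s.card ≤ g

/-!
Write `A = {a₁, …, a_h}` for the first coordinates of an `h`-fold sum of elements of
`GT(p, h, θ)`. The sum determines `∑ aᵢ` and, through the discrete logarithm, `∏ (θ + aᵢ)`.
So the two monic polynomials `∏ (X + aᵢ)` coming from two representations of the same element
agree in their two leading coefficients and at `θ`: their difference has degree `≤ h - 2` and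
vanishes at `θ`, whose minimal polynomial over `𝔽_p` has degree `h - 1` because `θ` is
primitive. Hence the polynomials, and so their roots `-aᵢ`, coincide.
-/

open Polynomial IntermediateField

theorem Multiset.map_fst_map_graph {G H : Type*} {φ : G → H} {m : Multiset (G × H)}
    (hm : ∀ x ∈ m, x ∈ Set.range fun a => (a, φ a)) :
    (m.map Prod.fst).map (fun a => (a, φ a)) = m := by
  rw [Multiset.map_map]
  conv_rhs => rw [← Multiset.map_id m]
  refine Multiset.map_congr rfl fun x hx => ?_
  obtain ⟨a, rfl⟩ := hm x hx
  rfl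

section Graph

variable {G H : Type*} [AddCommMonoid G] [AddCommMonoid H]

theorem Multiset.sum_map_graph (φ : G → H) (s : Multiset G) :
    (s.map fun a => (a, φ a)).sum = (s.sum, (s.map φ).sum) := by
  induction s using Multiset.induction with
  | empty => rfl
  | cons a s ih => simp [ih]

theorem isBhg_one_of_eq {A : Set G} {h : ℕ}
    (hA : ∀ m₁ m₂ : Multiset G, Multiset.card m₁ = h → Multiset.card m₂ = h →
      (∀ x ∈ m₁, x ∈ A) → (∀ x ∈ m₂, x ∈ A) → m₁.sum = m₂.sum → m₁ = m₂) :
    IsBhg A h 1 := by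
  intro b s hs
  refine Finset.card_le_one.mpr fun m₁ h₁ m₂ h₂ => ?_
  obtain ⟨card₁, mem₁, sum₁⟩ := hs m₁ h₁
  obtain ⟨card₂, mem₂, sum₂⟩ := hs m₂ h₂
  exact hA m₁ m₂ card₁ card₂ mem₁ mem₂ (sum₁.trans sum₂.symm)

theorem isBhg_range_graph_one {φ : G → H} {h : ℕ}
    (hφ : ∀ s t : Multiset G, Multiset.card s = h → Multiset.card t = h →
      s.sum = t.sum → (s.map φ).sum = (t.map φ).sum → s = t) :
    IsBhg (Set.range fun a => (a, φ a)) h 1 := by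
  refine isBhg_one_of_eq fun m₁ m₂ card₁ card₂ mem₁ mem₂ hsum => ?_
  rw [← Multiset.map_fst_map_graph mem₁, ← Multiset.map_fst_map_graph mem₂] at hsum ⊢
  rw [Multiset.sum_map_graph, Multiset.sum_map_graph, Prod.mk.injEq] at hsum
  rw [hφ _ _ (by simpa) (by simpa) hsum.1 hsum.2]

end Graph

theorem Multiset.sum_map_toAdd {ι M A E : Type*} [CommMonoid M] [AddCommMonoid A]
    [FunLike E M (Multiplicative A)] [MonoidHomClass E M (Multiplicative A)] (e : E)
    (u : ι → M) (s : Multiset ι) :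
    (s.map fun i => Multiplicative.toAdd (e (u i))).sum =
      Multiplicative.toAdd (e (s.map u).prod) := by
  induction s using Multiset.induction with
  | empty => simp
  | cons a s ih => simp [ih]

theorem Polynomial.natDegree_sub_le_of_monic_of_nextCoeff_eq {R : Type*} [Ring R]
    {f g : R[X]} (hf : f.Monic) (hg : g.Monic) (hdeg : f.natDegree = g.natDegree)
    (hnext : f.nextCoeff = g.nextCoeff) : (f - g).natDegree ≤ f.natDegree - 2 := by
  rw [natDegree_le_iff_coeff_eq_zero]
  intro N hN
  rw [coeff_sub, sub_eq_zero]
  rcases lt_trichotomy N f.natDegree with hlt | rfl | hgt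
  · have hpos : 0 < f.natDegree := by omega
    obtain rfl : N = f.natDegree - 1 := by omega
    rwa [nextCoeff_of_natDegree_pos hpos, nextCoeff_of_natDegree_pos (hdeg ▸ hpos), ← hdeg]
      at hnext
  · rw [hf.coeff_natDegree, hdeg, hg.coeff_natDegree]
  · rw [coeff_eq_zero_of_natDegree_lt hgt, coeff_eq_zero_of_natDegree_lt (hdeg ▸ hgt)]

theorem Multiset.eq_of_sum_eq_of_prod_sub_eq {K F : Type*} [Field K] [CommRing F]
    [Nontrivial F] [Algebra K F] {θ : F} (hθ : IsIntegral K θ) {s t : Multiset K}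
    (hcard : Multiset.card s = Multiset.card t)
    (hdeg : Multiset.card s ≤ (minpoly K θ).natDegree + 1) (hsum : s.sum = t.sum)
    (hprod : (s.map fun r => θ - algebraMap K F r).prod =
      (t.map fun r => θ - algebraMap K F r).prod) :
    s = t := by
  have monic (u : Multiset K) : (u.map fun r => X - C r).prod.Monic :=
    monic_multiset_prod_of_monic _ _ fun r _ => monic_X_sub_C r
  have aeval_prod (u : Multiset K) :
      aeval θ (u.map fun r => X - C r).prod = (u.map fun r => θ - algebraMap K F r).prod := by
    simp [map_multiset_prod, Multiset.map_map]
  suffices hfg : (s.map fun r => X - C r).prod = (t.map fun r => X - C r).prod by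
    rw [← roots_multiset_prod_X_sub_C s, hfg, roots_multiset_prod_X_sub_C]
  by_contra hfg
  have hsub := natDegree_sub_le_of_monic_of_nextCoeff_eq (monic s) (monic t)
    (by rw [natDegree_multiset_prod_X_sub_C_eq_card, natDegree_multiset_prod_X_sub_C_eq_card,
      hcard])
    (by rw [multiset_prod_X_sub_C_nextCoeff, multiset_prod_X_sub_C_nextCoeff, hsum])
  rw [natDegree_multiset_prod_X_sub_C_eq_card] at hsub
  have hmin := natDegree_le_of_dvd
    (minpoly.dvd K θ (by rw [map_sub, aeval_prod, aeval_prod, hprod, sub_self]))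
    (sub_ne_zero.mpr hfg)
  have := minpoly.natDegree_pos hθ
  omega

theorem Module.finrank_eq_of_card_eq_pow {K V : Type*} [DivisionRing K] [Fintype K]
    [AddCommGroup V] [Module K V] [Fintype V] {n : ℕ}
    (hcard : Fintype.card V = Fintype.card K ^ n) : Module.finrank K V = n :=
  Nat.pow_right_injective Fintype.one_lt_card
    ((Module.card_eq_pow_finrank (K := K) (V := V)).symm.trans hcard)

theorem IntermediateField.adjoin_simple_eq_top_of_forall_mem_zpowers {K F : Type*} [Field K]
    [Field F] [Algebra K F] {θ : Fˣ} (hθ : ∀ x : Fˣ, x ∈ Subgroup.zpowers θ) :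
    K⟮(θ : F)⟯ = ⊤ := by
  rw [eq_top_iff]
  rintro x -
  rcases eq_or_ne x 0 with rfl | hx
  · exact zero_mem _
  obtain ⟨n, hn⟩ := hθ (Units.mk0 x hx)
  rw [← Units.val_mk0 hx, ← hn, Units.val_zpow_eq_zpow_val]
  exact zpow_mem (mem_adjoin_simple_self K (θ : F)) n

theorem stmt_14_general (p h : ℕ) [Fact p.Prime] (hh : 3 ≤ h)
    {F : Type*} [Field F] [Fintype F] [Algebra (ZMod p) F]
    (hcard : Fintype.card F = p ^ (h - 1))
    (θ : Fˣ) (hθ : ∀ x : Fˣ, x ∈ Subgroup.zpowers θ)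
    -- `e` is the discrete logarithm to base `θ`
    (e : Fˣ ≃* Multiplicative (ZMod (p ^ (h - 1) - 1))) :
    IsBhg {x : ZMod p × ZMod (p ^ (h - 1) - 1) | ∃ a : ZMod p, ∃ u : Fˣ,
        (u : F) = (θ : F) + algebraMap (ZMod p) F a ∧
        x = (a, Multiplicative.toAdd (e u))} h 1 ∧
    Set.ncard {x : ZMod p × ZMod (p ^ (h - 1) - 1) | ∃ a : ZMod p, ∃ u : Fˣ,
        (u : F) = (θ : F) + algebraMap (ZMod p) F a ∧
        x = (a, Multiplicative.toAdd (e u))} = p := by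
  have hint : IsIntegral (ZMod p) (θ : F) := .of_finite _ _
  have hdeg : (minpoly (ZMod p) (θ : F)).natDegree = h - 1 := by
    have hfinrank : Module.finrank (ZMod p) F = h - 1 :=
      Module.finrank_eq_of_card_eq_pow (hcard.trans (by rw [ZMod.card]))
    rw [← hfinrank, ← Field.primitive_element_iff_minpoly_natDegree_eq]
    exact adjoin_simple_eq_top_of_forall_mem_zpowers hθ
  have hne (a : ZMod p) : (θ : F) + algebraMap (ZMod p) F a ≠ 0 := fun h0 =>
    (minpoly.two_le_natDegree_iff hint).mp (by omega)
      ⟨-a, by rw [map_neg]; linear_combination -h0⟩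
  set U : ZMod p → Fˣ := fun a => Units.mk0 _ (hne a)
  have hS : {x : ZMod p × ZMod (p ^ (h - 1) - 1) | ∃ a : ZMod p, ∃ u : Fˣ,
      (u : F) = (θ : F) + algebraMap (ZMod p) F a ∧ x = (a, Multiplicative.toAdd (e u))} =
      Set.range fun a => (a, Multiplicative.toAdd (e (U a))) := by
    ext x
    constructor
    · rintro ⟨a, u, hu, rfl⟩
      exact ⟨a, by rw [show u = U a from Units.ext hu]⟩
    · rintro ⟨a, rfl⟩
      exact ⟨a, U a, rfl, rfl⟩
  rw [hS, Set.ncard_range_of_injective fun a b hab => congrArg Prod.fst hab, Nat.card_zmod]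
  refine ⟨isBhg_range_graph_one fun s t hs ht hsum hlog => ?_, rfl⟩
  rw [Multiset.sum_map_toAdd e U, Multiset.sum_map_toAdd e U] at hlog
  have hprod := congrArg (Units.coeHom F) (e.injective hlog)
  simp only [map_multiset_prod, Multiset.map_map] at hprod
  refine Multiset.map_injective neg_injective
    (Multiset.eq_of_sum_eq_of_prod_sub_eq hint (by simp [hs, ht]) (by simp [hs, hdeg]; omega)
      (by rw [Multiset.sum_map_neg', Multiset.sum_map_neg', hsum]) ?_)
  simpa [U, Multiset.map_map, Function.comp_def] using hprod

theorem stmt_14 (p h : ℕ) [Fact p.Prime] (hh : 3 ≤ h)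
    {F : Type*} [Field F] [Fintype F] [Algebra (ZMod p) F]
    (hcard : Fintype.card F = p ^ (h - 1))
    (θ : Fˣ) (hθ : ∀ x : Fˣ, x ∈ Subgroup.zpowers θ)
    -- `e` is the discrete logarithm to base `θ`
    (e : Fˣ ≃* Multiplicative (ZMod (p ^ (h - 1) - 1)))
    (he : e θ = Multiplicative.ofAdd 1) :
    IsBhg {x : ZMod p × ZMod (p ^ (h - 1) - 1) | ∃ a : ZMod p, ∃ u : Fˣ,
        (u : F) = (θ : F) + algebraMap (ZMod p) F a ∧
        x = (a, Multiplicative.toAdd (e u))} h 1 ∧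
    Set.ncard {x : ZMod p × ZMod (p ^ (h - 1) - 1) | ∃ a : ZMod p, ∃ u : Fˣ,
        (u : F) = (θ : F) + algebraMap (ZMod p) F a ∧
        x = (a, Multiplicative.toAdd (e u))} = p :=
  stmt_14_general p h hh hcard θ hθ e
end
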